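/- Let I ⊆ {0,…,l} be nonempty and m a positive integer. (i) For every i ∉ I, the level-m affine reflection σ_i fixes m·ν_I and satisfies σ_i(ν) = s_{α_i}(ν − m·ν_I) + m·ν_I for all ν ∈ 𝔱*, where s_{α_i} ∈ W is the linear reflection in α_i; consequently every w ∈ W_I fixes m·ν_I and acts by ν ↦ w̄(ν − m·ν_I) + m·ν_I, where w̄ is the linear part of w, and w ↦ w̄ is an isomorphism from W_I onto the subgroup W̄_I ⊆ W generated by {s_{α_i} : i ∉ I}. (ii) For w̄ ∈ W̄_I and an integer m ≥ 0, define w̄•_m ν := w̄(ν − m·ν_I) + m·ν_I. Then for every integer k ≥ 0, every w̄ ∈ W̄_I, and every μ ∈ 𝔱*: w̄•_k(μ+ρ_I) − ρ_I = w̄•_{k+h^∨}(μ+ρ) − ρ. -/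

import Mathlib

/-!
For `i ∉ I` one has `⟨ρ_I, α_i^∨⟩ = 1`: the `α_j`, `j ∉ I`, form a base of `R_I` (this uses that
all coefficients of the highest root are positive), so `s_{α_i}` permutes the positive roots of
`R_I` other than `α_i`. Likewise `⟨ρ, α_i^∨⟩ = 1 - h^∨ δ_{i,0}`, because `α_0^∨ = -θ^∨`. Hence
`⟨ν_I, α_i^∨⟩ = -δ_{i,0}`, i.e. `m ν_I` lies on the mirror of `σ_i`, and `σ_i` is `s_{α_i}`
conjugated by the translation by `m ν_I`. So all of `W_I` fixes `m ν_I`, an element of `W_I` is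
determined by its linear part, and `w ↦ w̄` sends the generators `σ_i` of `W_I` to the generators
`s_{α_i}` of `W̄_I`. Part (ii) is the identity `h^∨ ν_I = ρ - ρ_I`.
-/

/- Common setup: an irreducible reduced crystallographic root system `R ⊂ 𝔱*` spanning `𝔱*`,
with simple roots `α 1,…,α l`, `α 0 = -θ` (θ the highest root), coroots, weight lattice,
(level `m`) affine Weyl groups acting on `𝔱*` and `𝔱`, anti-invariants, skew-symmetrization
maps and the associated chain complexes, following Meinrenken,
"On the quantization of conjugacy classes", Section 5. -/

noncomputable section
open scoped BigOperators InnerProductSpace Classical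
open Function

namespace CCQ

section Generic

variable {M : Type*} [AddCommGroup M] [Module ℝ M]

/-- The affine reflection `x ↦ x - (f x + c) • v`, where `f v = 2`. -/
def aref {f : Module.Dual ℝ M} {v : M} (h : f v = 2) (c : ℝ) : M ≃ᵃ[ℝ] M :=
  (Module.reflection h).toAffineEquiv.trans (AffineEquiv.constVAdd ℝ M (-(c • v)))

/-- The determinant of the linear part of an affine transformation, recorded as an
integer sign (all the affine transformations considered here are products of
reflections, whose linear parts have determinant `±1`). -/
def asign (w : M ≃ᵃ[ℝ] M) : ℤ :=
  if LinearMap.det w.linear.toLinearMap = 1 then 1 else -1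

/-- `φ` is anti-invariant under the subgroup `H`: `w·φ = det(w)·φ`, for the action
`(w·φ)(x) = φ(w⁻¹ x)`. -/
def AntiInv (H : Subgroup (M ≃ᵃ[ℝ] M)) (φ : M → ℤ) : Prop :=
  ∀ w ∈ H, ∀ x : M, φ (w⁻¹ x) = asign w * φ x

/-- `Sk^H(x) = Σ_{w ∈ H} det(w) · δ_{w x}` (δ-function skew-symmetrization over a
(finite) subgroup `H`). -/
def SkOrb (H : Subgroup (M ≃ᵃ[ℝ] M)) (x : M) : M → ℤ := fun y =>
  ∑ᶠ w : H, if y = (w : M ≃ᵃ[ℝ] M) x then asign (w : M ≃ᵃ[ℝ] M) else 0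

/-- `T` is a complete set of representatives of the left cosets `K/H`. -/
def IsRepFinset (H K : Subgroup (M ≃ᵃ[ℝ] M)) (T : Finset (M ≃ᵃ[ℝ] M)) : Prop :=
  (↑T : Set (M ≃ᵃ[ℝ] M)) ⊆ (K : Set (M ≃ᵃ[ℝ] M)) ∧
    ∀ w ∈ K, ∃! u, u ∈ T ∧ u⁻¹ * w ∈ H

/-- `T` is a complete set of representatives of the left cosets `K/H` (possibly infinite). -/
def IsRepSet (H K : Subgroup (M ≃ᵃ[ℝ] M)) (T : Set (M ≃ᵃ[ℝ] M)) : Prop :=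
  T ⊆ (K : Set (M ≃ᵃ[ℝ] M)) ∧ ∀ w ∈ K, ∃! u, u ∈ T ∧ u⁻¹ * w ∈ H

/-- Relative skew-symmetrization `Σ_u det(u)·(u·φ)` over a finite set of coset
representatives. -/
def SkRep (T : Finset (M ≃ᵃ[ℝ] M)) (φ : M → ℤ) : M → ℤ := fun x =>
  ∑ u ∈ T, asign u * φ (u⁻¹ x)

/-- Skew-symmetrization `Σ_u det(u)·(u·φ)` over a (possibly infinite, pointwise finite)
set of coset representatives. -/
def SkRepSet (T : Set (M ≃ᵃ[ℝ] M)) (φ : M → ℤ) : M → ℤ := fun x =>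
  ∑ᶠ u : T, asign (u : M ≃ᵃ[ℝ] M) * φ ((u : M ≃ᵃ[ℝ] M)⁻¹ x)

/-- The chain supported on the single direct summand indexed by `I`. -/
def single {n : ℕ} (I : Finset (Fin n)) (φ : M → ℤ) : Finset (Fin n) → M → ℤ := fun K =>
  if K = I then φ else 0

/-- The simplicial differential `∂`: on the summand indexed by `I = {i₀ < … < i_p}`,
`∂φ = Σ_r (-1)^r Sk_I^{δ_r I}(φ)`, written via its components: the component of `∂c` in
the summand indexed by `K` is `Σ_{i ∉ K} (-1)^{#{j ∈ K : j < i}} Sk_{K∪{i}}^K (c (K∪{i}))`.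
The skew-symmetrizations `Sk_I^K` are computed using the chosen coset representative
sets `Srep K I` for `W_K/W_I`. -/
def bdGen {n : ℕ} (Srep : Finset (Fin n) → Finset (Fin n) → Finset (M ≃ᵃ[ℝ] M))
    (c : Finset (Fin n) → M → ℤ) : Finset (Fin n) → M → ℤ := fun K x =>
  ∑ i ∈ Kᶜ, (-1 : ℤ) ^ (K.filter (fun j => j < i)).card *
    SkRep (Srep K (insert i K)) (c (insert i K)) x

/-- Restriction of a `ℤ`-valued function to a subset (extension by zero). -/
def restr (O : Set M) (φ : M → ℤ) : M → ℤ := fun x => if x ∈ O then φ x else 0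

end Generic

/-- An irreducible reduced crystallographic root system `R` in `𝔱*`, spanning `𝔱*`,
together with a choice of simple roots `α 1, …, α l` and `α 0 := -θ`, where `θ` is the
highest root.  `coroot β ∈ 𝔱` is the coroot `β^∨` of a root `β ∈ R`. -/
structure RSD (𝔱 : Type*) [AddCommGroup 𝔱] [Module ℝ 𝔱] where
  l : ℕ
  hl : 0 < l
  R : Set (Module.Dual ℝ 𝔱)
  finR : R.Finite
  spanR : Submodule.span ℝ R = ⊤
  coroot : Module.Dual ℝ 𝔱 → 𝔱
  pair_self : ∀ β ∈ R, β (coroot β) = 2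
  cryst : ∀ β ∈ R, ∀ γ ∈ R, ∃ n : ℤ, γ (coroot β) = (n : ℝ)
  reduced : ∀ β ∈ R, ∀ t : ℝ, t • β ∈ R → t = 1 ∨ t = -1
  reflect_mem : ∀ β ∈ R, ∀ γ ∈ R, γ - γ (coroot β) • β ∈ R
  α : Fin (l + 1) → Module.Dual ℝ 𝔱
  α_mem : ∀ i, α i ∈ R
  indep : LinearIndependent ℝ fun i : Fin l => α i.succ
  base : ∀ β ∈ R, (∃ c : Fin l → ℕ, β = ∑ i, (c i : ℝ) • α i.succ) ∨
    ∃ c : Fin l → ℕ, β = -∑ i, (c i : ℝ) • α i.succ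
  highest : ∀ β ∈ R, ∃ c : Fin l → ℕ, -α 0 - β = ∑ i, (c i : ℝ) • α i.succ
  irred : ∀ T : Set (Fin l), T.Nonempty → Tᶜ.Nonempty →
    ∃ i ∈ T, ∃ j ∈ Tᶜ, α i.succ (coroot (α j.succ)) ≠ 0

namespace RSD

variable {𝔱 : Type*} [AddCommGroup 𝔱] [Module ℝ 𝔱] (S : RSD 𝔱)

/-- The highest root `θ`. -/
def theta : Module.Dual ℝ 𝔱 := -S.α 0

/-- The Kronecker delta `δ_{i,0}`. -/
def kd (i : Fin (S.l + 1)) : ℝ := if i = 0 then 1 else 0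

/-- The positive roots. -/
def posRoots : Finset (Module.Dual ℝ 𝔱) :=
  S.finR.toFinset.filter fun β => ∃ c : Fin S.l → ℕ, β = ∑ i, (c i : ℝ) • S.α i.succ

/-- `ρ`, the half-sum of the positive roots. -/
def rho : Module.Dual ℝ 𝔱 := (2 : ℝ)⁻¹ • ∑ β ∈ S.posRoots, β

/-- The dual Coxeter number `h^∨ = 1 + ⟨ρ, θ^∨⟩`. -/
def hv : ℝ := 1 + S.rho (S.coroot S.theta)

/-- The weight lattice `Λ* = {μ : ⟨μ, β^∨⟩ ∈ ℤ for all β ∈ R}`. -/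
def wlat : Set (Module.Dual ℝ 𝔱) := {μ | ∀ β ∈ S.R, ∃ n : ℤ, μ (S.coroot β) = (n : ℝ)}

theorem pairD (i : Fin (S.l + 1)) :
    Module.Dual.eval ℝ 𝔱 (S.coroot (S.α i)) (S.α i) = 2 := by
  simpa using S.pair_self (S.α i) (S.α_mem i)

theorem pairDR {β : Module.Dual ℝ 𝔱} (hβ : β ∈ S.R) :
    Module.Dual.eval ℝ 𝔱 (S.coroot β) β = 2 := by
  simpa using S.pair_self β hβ

/-- The linear reflection `s_{α_i} : ν ↦ ν - ⟨ν, α_i^∨⟩ α_i` on `𝔱*`. -/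
def srefl (i : Fin (S.l + 1)) : Module.Dual ℝ 𝔱 ≃ₗ[ℝ] Module.Dual ℝ 𝔱 :=
  Module.reflection (S.pairD i)

/-- The linear reflection `s_β` on `𝔱*`, for a root `β ∈ R`. -/
def sreflRoot {β : Module.Dual ℝ 𝔱} (hβ : β ∈ S.R) :
    Module.Dual ℝ 𝔱 ≃ₗ[ℝ] Module.Dual ℝ 𝔱 :=
  Module.reflection (S.pairDR hβ)

/-- The Weyl group `W` acting on `𝔱*` (viewed inside the group of affine
transformations of `𝔱*`): the group generated by the reflections `s_β`, `β ∈ R`. -/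
def WeylA : Subgroup (Module.Dual ℝ 𝔱 ≃ᵃ[ℝ] Module.Dual ℝ 𝔱) :=
  Subgroup.closure {w | ∃ β, ∃ hβ : β ∈ S.R, w = (S.sreflRoot hβ).toAffineEquiv}

/-- The subgroup `W̄_I ⊆ W` of linear automorphisms of `𝔱*` generated by the
reflections `s_{α_i}`, `i ∉ I`. -/
def WbarI (I : Finset (Fin (S.l + 1))) :
    Subgroup (Module.Dual ℝ 𝔱 ≃ₗ[ℝ] Module.Dual ℝ 𝔱) :=
  Subgroup.closure {e | ∃ i ∉ I, e = S.srefl i}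

/-- The level `m` affine reflection `σ_i : ν ↦ ν - (⟨ν,α_i^∨⟩ + m δ_{i,0}) α_i` of `𝔱*`. -/
def sigma (m : ℝ) (i : Fin (S.l + 1)) :
    Module.Dual ℝ 𝔱 ≃ᵃ[ℝ] Module.Dual ℝ 𝔱 :=
  aref (S.pairD i) (m * S.kd i)

/-- The level `m` affine Weyl group `W_aff(m)`, acting on `𝔱*`. -/
def WaffA (m : ℝ) : Subgroup (Module.Dual ℝ 𝔱 ≃ᵃ[ℝ] Module.Dual ℝ 𝔱) :=
  Subgroup.closure (Set.range (S.sigma m))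

/-- The subgroup `W_I ⊆ W_aff(m)` generated by the `σ_i` with `i ∉ I`. -/
def WIA (m : ℝ) (I : Finset (Fin (S.l + 1))) :
    Subgroup (Module.Dual ℝ 𝔱 ≃ᵃ[ℝ] Module.Dual ℝ 𝔱) :=
  Subgroup.closure {w | ∃ i ∉ I, w = S.sigma m i}

/-- `ℤ[Λ*]^{W_I-as}`: finitely supported functions `Λ* → ℤ` that are `W_I`-anti-invariant. -/
def ZLamAS (m : ℝ) (I : Finset (Fin (S.l + 1))) : Set (Module.Dual ℝ 𝔱 → ℤ) :=
  {φ | (support φ).Finite ∧ support φ ⊆ S.wlat ∧ AntiInv (S.WIA m I) φ}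

/-- `ℤ[[Λ*]]^{W_aff-as}`: all functions `Λ* → ℤ` that are `W_aff(m)`-anti-invariant. -/
def ZZLamAS (m : ℝ) : Set (Module.Dual ℝ 𝔱 → ℤ) :=
  {φ | support φ ⊆ S.wlat ∧ AntiInv (S.WaffA m) φ}

/-- The chain group `C_p = ⊕_{|I| = p+1} ℤ[Λ*]^{W_I-as}`, realized as the set of
families `c` with `c I ∈ ℤ[Λ*]^{W_I-as}` for `#I = p+1` and `c I = 0` otherwise. -/
def ChainA (m : ℝ) (p : ℕ) : Set (Finset (Fin (S.l + 1)) → Module.Dual ℝ 𝔱 → ℤ) :=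
  {c | ∀ I, (I.card = p + 1 → c I ∈ S.ZLamAS m I) ∧ (I.card ≠ p + 1 → c I = 0)}

/-- The family `Srep` provides coset representatives of `W_K/W_I` for all `K ⊆ I`. -/
def RepFamilyA (m : ℝ)
    (Srep : Finset (Fin (S.l + 1)) → Finset (Fin (S.l + 1)) →
      Finset (Module.Dual ℝ 𝔱 ≃ᵃ[ℝ] Module.Dual ℝ 𝔱)) : Prop :=
  ∀ K I : Finset (Fin (S.l + 1)), K.Nonempty → K ⊆ I →
    IsRepFinset (S.WIA m I) (S.WIA m K) (Srep K I)

/-- The family `Seps` provides coset representatives of `W_aff(m)/W_{{i}}`. -/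
def RepEpsA (m : ℝ)
    (Seps : Fin (S.l + 1) → Set (Module.Dual ℝ 𝔱 ≃ᵃ[ℝ] Module.Dual ℝ 𝔱)) : Prop :=
  ∀ i, IsRepSet (S.WIA m {i}) (S.WaffA m) (Seps i)

/-- The augmentation `ε : C_0 → ℤ[[Λ*]]^{W_aff-as}`, given on the summand indexed by
`{i}` by `Σ_u det(u)·(u·φ)`, `u` running over the coset representatives `Seps i`. -/
def epsA (Seps : Fin (S.l + 1) → Set (Module.Dual ℝ 𝔱 ≃ᵃ[ℝ] Module.Dual ℝ 𝔱))
    (c : Finset (Fin (S.l + 1)) → Module.Dual ℝ 𝔱 → ℤ) : Module.Dual ℝ 𝔱 → ℤ := fun x =>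
  ∑ i, SkRepSet (Seps i) (c {i}) x

/-- The orbit of `μ ∈ 𝔱*` under the level `m` affine Weyl group. -/
def orbA (m : ℝ) (μ : Module.Dual ℝ 𝔱) : Set (Module.Dual ℝ 𝔱) :=
  {ν | ∃ w ∈ S.WaffA m, ν = w μ}

/-- `Λ*_{I,k} = {μ ∈ Λ* : ⟨μ,α_i^∨⟩ + k δ_{i,0} ≥ 0 for all i ∉ I}`. -/
def LamIk (k : ℝ) (I : Finset (Fin (S.l + 1))) : Set (Module.Dual ℝ 𝔱) :=
  {μ ∈ S.wlat | ∀ i ∉ I, μ (S.coroot (S.α i)) + k * S.kd i ≥ 0}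

/-- `Λ*_k`, the set of level `k` weights. -/
def LamK (k : ℝ) : Set (Module.Dual ℝ 𝔱) :=
  {μ ∈ S.wlat | ∀ i, μ (S.coroot (S.α i)) + k * S.kd i ≥ 0}

/-- The positive roots of `R_I = R ∩ ℤ-span(𝔖_I)` relative to the base
`𝔖_I = {α_i : i ∉ I}`: the roots that are `ℕ`-combinations of `𝔖_I`. -/
def posRootsI (I : Finset (Fin (S.l + 1))) : Finset (Module.Dual ℝ 𝔱) :=
  S.finR.toFinset.filter fun β =>
    ∃ c : Fin (S.l + 1) → ℕ, (∀ i ∈ I, c i = 0) ∧ β = ∑ i, (c i : ℝ) • S.α i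

/-- `ρ_I`, the half-sum of the positive roots of `R_I`. -/
def rhoI (I : Finset (Fin (S.l + 1))) : Module.Dual ℝ 𝔱 :=
  (2 : ℝ)⁻¹ • ∑ β ∈ S.posRootsI I, β

/-- `ν_I = (ρ - ρ_I)/h^∨`. -/
def nuI (I : Finset (Fin (S.l + 1))) : Module.Dual ℝ 𝔱 := S.hv⁻¹ • (S.rho - S.rhoI I)

theorem pairB (i : Fin (S.l + 1)) : S.α i (S.coroot (S.α i)) = 2 :=
  S.pair_self (S.α i) (S.α_mem i)

/-- The affine reflection `r_i : ξ ↦ ξ - (⟨α_i,ξ⟩ + δ_{i,0}) α_i^∨` of `𝔱`, i.e. the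
orthogonal (for the basic inner product) reflection in the hyperplane
`{ξ : ⟨α_i,ξ⟩ + δ_{i,0} = 0}`. -/
def rrefl (i : Fin (S.l + 1)) : 𝔱 ≃ᵃ[ℝ] 𝔱 := aref (S.pairB i) (S.kd i)

/-- The affine Weyl group `W_aff` acting on `𝔱`, generated by `r_0, …, r_l`. -/
def WaffB : Subgroup (𝔱 ≃ᵃ[ℝ] 𝔱) := Subgroup.closure (Set.range S.rrefl)

/-- The subgroup `W_I ⊆ W_aff` generated by the `r_i` with `i ∉ I`. -/
def WIB (I : Finset (Fin (S.l + 1))) : Subgroup (𝔱 ≃ᵃ[ℝ] 𝔱) :=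
  Subgroup.closure {w | ∃ i ∉ I, w = S.rrefl i}

/-- The orbit `V = W_aff · ξ ⊆ 𝔱`. -/
def orbB (ξ : 𝔱) : Set 𝔱 := {x | ∃ w ∈ S.WaffB, x = w ξ}

/-- `ℓ(x) = min {ℓ(w) : w ∈ W_aff, x = w·ξ}`: the minimal length of a word in the
generators `r_0,…,r_l` moving `ξ` to `x`. -/
def lenPt (ξ x : 𝔱) : ℕ :=
  sInf {n | ∃ L : List (Fin (S.l + 1)), L.length = n ∧ x = (L.map S.rrefl).prod ξ}

/-- `𝔱_{I,+} = {ξ : ⟨α_i,ξ⟩ + δ_{i,0} ≥ 0 for all i ∉ I}`. -/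
def tplus (I : Finset (Fin (S.l + 1))) : Set 𝔱 := {ξ | ∀ i ∉ I, S.α i ξ + S.kd i ≥ 0}

/-- `V̄^I = V ∩ 𝔱_{I,+}`. -/
def VbarI (ξ : 𝔱) (I : Finset (Fin (S.l + 1))) : Set 𝔱 := S.orbB ξ ∩ S.tplus I

/-- `V^I = V ∩ int(𝔱_{I,+})`. -/
def VIset [TopologicalSpace 𝔱] (ξ : 𝔱) (I : Finset (Fin (S.l + 1))) : Set 𝔱 :=
  S.orbB ξ ∩ interior (S.tplus I)

/-- `ℤ[V]^{W_I-as}`: finitely supported functions `V → ℤ` that are `W_I`-anti-invariant. -/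
def ZVAS (ξ : 𝔱) (I : Finset (Fin (S.l + 1))) : Set (𝔱 → ℤ) :=
  {φ | (support φ).Finite ∧ support φ ⊆ S.orbB ξ ∧ AntiInv (S.WIB I) φ}

/-- The chain group `C_p(J) = ⊕_{|I| = p+1} ℤ[V]^{W_I-as}`. -/
def ChainB (ξ : 𝔱) (p : ℕ) : Set (Finset (Fin (S.l + 1)) → 𝔱 → ℤ) :=
  {c | ∀ I, (I.card = p + 1 → c I ∈ S.ZVAS ξ I) ∧ (I.card ≠ p + 1 → c I = 0)}

/-- The family `Srep` provides coset representatives of `W_K/W_I` for all `K ⊆ I`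
(affine Weyl group acting on `𝔱`). -/
def RepFamilyB (Srep : Finset (Fin (S.l + 1)) → Finset (Fin (S.l + 1)) →
    Finset (𝔱 ≃ᵃ[ℝ] 𝔱)) : Prop :=
  ∀ K I : Finset (Fin (S.l + 1)), K.Nonempty → K ⊆ I →
    IsRepFinset (S.WIB I) (S.WIB K) (Srep K I)

/-- The filtration `F_N C_p(J)`: the subgroup generated by the basis elements
`β_I(x) = Sk^I(x)` with `#I = p+1`, `x ∈ V^I`, `ℓ(x) ≤ N`. -/
def FNB [TopologicalSpace 𝔱] (ξ : 𝔱) (N : ℤ) (p : ℕ) :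
    AddSubgroup (Finset (Fin (S.l + 1)) → 𝔱 → ℤ) :=
  AddSubgroup.closure {c | ∃ I x, I.card = p + 1 ∧ x ∈ S.VIset ξ I ∧
    (S.lenPt ξ x : ℤ) ≤ N ∧ c = single I (SkOrb (S.WIB I) x)}

/-- The homotopy operator `h_i`, defined on basis elements by `h_i β_I(x) = 0` if
`i ∈ I` and `h_i β_I(x) = (-1)^{#{j ∈ I : j < i}} β_{I∪{i}}(x)` if `i ∉ I` (the
coefficient of `β_I(x)`, `x ∈ V^I`, in an anti-invariant `φ` is `φ(x)`). -/
def hBmap [TopologicalSpace 𝔱] (ξ : 𝔱) (i : Fin (S.l + 1))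
    (c : Finset (Fin (S.l + 1)) → 𝔱 → ℤ) : Finset (Fin (S.l + 1)) → 𝔱 → ℤ := fun K y =>
  if i ∈ K then
    ∑ᶠ x : S.VIset ξ (K.erase i),
      (-1 : ℤ) ^ ((K.erase i).filter (fun j => j < i)).card * c (K.erase i) (x : 𝔱) *
        SkOrb (S.WIB K) (x : 𝔱) y
  else 0

/-- `A_i = id - h_i ∂ - ∂ h_i`. -/
def AiB [TopologicalSpace 𝔱] (ξ : 𝔱)
    (Srep : Finset (Fin (S.l + 1)) → Finset (Fin (S.l + 1)) → Finset (𝔱 ≃ᵃ[ℝ] 𝔱))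
    (i : Fin (S.l + 1)) (c : Finset (Fin (S.l + 1)) → 𝔱 → ℤ) :
    Finset (Fin (S.l + 1)) → 𝔱 → ℤ :=
  c - S.hBmap ξ i (bdGen Srep c) - bdGen Srep (S.hBmap ξ i c)

/-- `A = A_0 ∘ A_1 ∘ ⋯ ∘ A_l`. -/
def Acomp [TopologicalSpace 𝔱] (ξ : 𝔱)
    (Srep : Finset (Fin (S.l + 1)) → Finset (Fin (S.l + 1)) → Finset (𝔱 ≃ᵃ[ℝ] 𝔱))
    (c : Finset (Fin (S.l + 1)) → 𝔱 → ℤ) : Finset (Fin (S.l + 1)) → 𝔱 → ℤ :=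
  (List.finRange (S.l + 1)).foldr (fun i d => S.AiB ξ Srep i d) c

end RSD

end CCQ

open CCQ Function

namespace AffineEquiv

variable {k V : Type*} [Ring k] [AddCommGroup V] [Module k V]

theorem apply_eq_linear_sub_add {w : V ≃ᵃ[k] V} {p : V} (hp : w p = p) (x : V) :
    w x = w.linear (x - p) + p := by
  have h := w.toAffineMap.linearMap_vsub x p
  simp only [coe_linear, LinearEquiv.coe_coe, vsub_eq_sub, coe_toAffineMap, hp] at h
  rw [h, sub_add_cancel]

theorem ext_of_linear_eq_of_apply_eq {w w' : V ≃ᵃ[k] V} {p : V} (hw : w p = p) (hw' : w' p = p)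
    (h : w.linear = w'.linear) : w = w' :=
  ext fun x => by rw [apply_eq_linear_sub_add hw, apply_eq_linear_sub_add hw', h]

theorem apply_eq_self_of_mem_closure {s : Set (V ≃ᵃ[k] V)} {p : V} (hs : ∀ g ∈ s, g p = p)
    {w : V ≃ᵃ[k] V} (hw : w ∈ Subgroup.closure s) : w p = p := by
  induction hw using Subgroup.closure_induction with
  | mem g hg => exact hs g hg
  | one => rfl
  | mul g g' _ _ hg hg' => simp [hg, hg']
  | inv g _ hg => rw [inv_def, symm_apply_eq, hg]

end AffineEquiv

namespace CCQ

section AffineReflection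

variable {M : Type*} [AddCommGroup M] [Module ℝ M] {f : Module.Dual ℝ M} {v : M}

theorem aref_apply (h : f v = 2) (c : ℝ) (x : M) : aref h c x = x - (f x + c) • v := by
  simp [aref, Module.reflection_apply, AffineEquiv.constVAdd_apply]
  module

variable {h : f v = 2} {c : ℝ} {p : M}

theorem aref_apply_of_apply_eq_neg (hp : f p = -c) : aref h c p = p := by
  simp [aref_apply, hp]

theorem aref_apply_eq_reflection_sub_add (hp : f p = -c) (x : M) :
    aref h c x = Module.reflection h (x - p) + p := by
  rw [aref_apply, Module.reflection_apply, map_sub, hp]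
  module

end AffineReflection

end CCQ

namespace CCQ.RSD

variable {𝔱 : Type*} [AddCommGroup 𝔱] [Module ℝ 𝔱] (S : RSD 𝔱)

theorem ne_zero_of_mem {β : Module.Dual ℝ 𝔱} (hβ : β ∈ S.R) : β ≠ 0 := by
  rintro rfl
  simpa using S.pair_self 0 hβ

theorem neg_mem {β : Module.Dual ℝ 𝔱} (hβ : β ∈ S.R) : -β ∈ S.R := by
  have h := S.reflect_mem β hβ β hβ
  rwa [S.pair_self β hβ, two_smul, sub_add_cancel_left] at h

theorem theta_mem : S.theta ∈ S.R := S.neg_mem (S.α_mem 0)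

theorem alpha_zero_eq_neg_theta : S.α 0 = -S.theta := (neg_neg _).symm

theorem coeff_eq_of_sum_eq {x y : Fin S.l → ℝ}
    (h : ∑ k, x k • S.α k.succ = ∑ k, y k • S.α k.succ) (k : Fin S.l) : x k = y k := by
  have h0 : ∑ j, (x j - y j) • S.α j.succ = 0 := by
    rw [Finset.sum_congr rfl fun j _ => sub_smul (x j) (y j) (S.α j.succ),
      Finset.sum_sub_distrib, h, sub_self]
  exact sub_eq_zero.mp (Fintype.linearIndependent_iff.mp S.indep _ h0 k)

theorem mem_posRoots {β : Module.Dual ℝ 𝔱} :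
    β ∈ S.posRoots ↔ β ∈ S.R ∧ ∃ c : Fin S.l → ℕ, β = ∑ k, (c k : ℝ) • S.α k.succ := by
  simp [posRoots, S.finR.mem_toFinset]

theorem exists_theta_eq_sum_add (j : Fin S.l) : ∃ c : Fin S.l → ℕ,
    S.theta = ∑ k, ((c k + if k = j then 1 else 0 : ℕ) : ℝ) • S.α k.succ := by
  obtain ⟨c, hc⟩ := S.highest (S.α j.succ) (S.α_mem _)
  refine ⟨c, ?_⟩
  simp only [Nat.cast_add, Nat.cast_ite, Nat.cast_one, Nat.cast_zero, add_smul, ite_smul,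
    one_smul, zero_smul, Finset.sum_add_distrib, Finset.sum_ite_eq', Finset.mem_univ, if_true]
  rw [← hc, theta]
  abel

theorem exists_theta_eq_sum : ∃ t : Fin S.l → ℕ,
    S.theta = ∑ k, (t k : ℝ) • S.α k.succ ∧ ∀ k, 1 ≤ t k := by
  obtain ⟨c, hc⟩ := S.exists_theta_eq_sum_add ⟨0, S.hl⟩
  refine ⟨_, hc, fun k => ?_⟩
  obtain ⟨d, hd⟩ := S.exists_theta_eq_sum_add k
  have := S.coeff_eq_of_sum_eq (hc.symm.trans hd) k
  rw [if_pos rfl] at this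
  norm_cast at this
  omega

theorem theta_mem_posRoots : S.theta ∈ S.posRoots :=
  let ⟨t, ht, _⟩ := S.exists_theta_eq_sum
  S.mem_posRoots.mpr ⟨S.theta_mem, t, ht⟩

/-- If `⟨β, θ^∨⟩ ≤ -1`, the root `s_θ β = β + nθ`, `n ≥ 1`, would lie above `θ`. -/
theorem apply_coroot_theta_nonneg {β : Module.Dual ℝ 𝔱} (hβ : β ∈ S.posRoots) :
    0 ≤ β (S.coroot S.theta) := by
  by_contra hneg
  obtain ⟨hβR, b, hb⟩ := S.mem_posRoots.mp hβ
  obtain ⟨t, ht, -⟩ := S.exists_theta_eq_sum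
  obtain ⟨n, hn⟩ := S.cryst S.theta S.theta_mem β hβR
  have hn1 : (n : ℝ) + 1 ≤ 0 := by
    have : n < 0 := by exact_mod_cast hn ▸ not_le.mp hneg
    exact_mod_cast this
  obtain ⟨d, hd⟩ := S.highest _ (S.reflect_mem _ S.theta_mem β hβR)
  have hsum : -S.α 0 - (β - β (S.coroot S.theta) • S.theta) =
      ∑ k, (((n : ℝ) + 1) * t k - b k) • S.α k.succ := by
    have : ∑ k, (((n : ℝ) + 1) * t k - b k) • S.α k.succ = ((n : ℝ) + 1) • S.theta - β := by
      rw [ht, hb, Finset.smul_sum, ← Finset.sum_sub_distrib]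
      exact Finset.sum_congr rfl fun k _ => by module
    rw [this, hn, theta]
    module
  have hb0 : ∀ k, (b k : ℝ) = 0 := fun k => by
    have := S.coeff_eq_of_sum_eq (hsum.symm.trans hd) k
    nlinarith [(d k).cast_nonneg (α := ℝ), (b k).cast_nonneg (α := ℝ), (t k).cast_nonneg (α := ℝ)]
  exact S.ne_zero_of_mem hβR (by simp [hb, hb0])

theorem hv_pos : 0 < S.hv := by
  have h2 : S.theta (S.coroot S.theta) = 2 := S.pair_self _ S.theta_mem
  have hsum : 2 ≤ ∑ β ∈ S.posRoots, β (S.coroot S.theta) :=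
    h2 ▸ Finset.single_le_sum (fun β hβ => S.apply_coroot_theta_nonneg hβ) S.theta_mem_posRoots
  have : S.rho (S.coroot S.theta) = 2⁻¹ * ∑ β ∈ S.posRoots, β (S.coroot S.theta) := by
    simp [rho]
  rw [hv, this]
  linarith

theorem sum_smul_alpha_eq {t : Fin S.l → ℕ} (ht : S.theta = ∑ k, (t k : ℝ) • S.α k.succ)
    (x : Fin (S.l + 1) → ℝ) :
    ∑ i, x i • S.α i = ∑ k, (x k.succ - x 0 * t k) • S.α k.succ := by
  rw [Fin.sum_univ_succ, S.alpha_zero_eq_neg_theta, ht, smul_neg, Finset.smul_sum,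
    ← Finset.sum_neg_distrib, ← Finset.sum_add_distrib]
  exact Finset.sum_congr rfl fun k _ => by module

theorem neg_sum_smul_alpha_succ (y : Fin S.l → ℝ) :
    -∑ k, y k • S.α k.succ = ∑ k, (-y k) • S.α k.succ := by
  rw [← Finset.sum_neg_distrib]
  exact Finset.sum_congr rfl fun k _ => (neg_smul _ _).symm

theorem coeff_le_coeff_theta {t : Fin S.l → ℕ} (ht : S.theta = ∑ k, (t k : ℝ) • S.α k.succ)
    {γ : Module.Dual ℝ 𝔱} (hγ : γ ∈ S.R) {y : Fin S.l → ℝ}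
    (hy : γ = ∑ k, y k • S.α k.succ) (k : Fin S.l) : y k ≤ t k := by
  obtain ⟨d, hd⟩ := S.highest γ hγ
  have hsum : S.theta - γ = ∑ k, ((t k : ℝ) - y k) • S.α k.succ := by
    rw [ht, hy, ← Finset.sum_sub_distrib]
    exact Finset.sum_congr rfl fun k _ => by module
  have := S.coeff_eq_of_sum_eq (hsum.symm.trans hd) k
  linarith [(d k).cast_nonneg (α := ℝ)]

theorem coeff_nonneg_or_nonpos {γ : Module.Dual ℝ 𝔱} (hγ : γ ∈ S.R) {y : Fin S.l → ℝ}
    (hy : γ = ∑ k, y k • S.α k.succ) : (∀ k, 0 ≤ y k) ∨ ∀ k, y k ≤ 0 := by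
  rcases S.base γ hγ with ⟨c, hc⟩ | ⟨c, hc⟩
  · exact .inl fun k => S.coeff_eq_of_sum_eq (hy.symm.trans hc) k ▸ (c k).cast_nonneg
  · refine .inr fun k => ?_
    rw [S.neg_sum_smul_alpha_succ] at hc
    rw [S.coeff_eq_of_sum_eq (hy.symm.trans hc) k, neg_nonpos]
    exact (c k).cast_nonneg

theorem exists_succ_mem_of_zero_notMem {I : Finset (Fin (S.l + 1))} (hI : I.Nonempty) (h0 : 0 ∉ I) :
    ∃ k : Fin S.l, k.succ ∈ I := by
  obtain ⟨j, hj⟩ := hI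
  rcases Fin.eq_zero_or_eq_succ j with rfl | ⟨k, rfl⟩
  · exact absurd hj h0
  · exact ⟨k, hj⟩

theorem eq_zero_of_sum_smul_alpha_eq_zero {I : Finset (Fin (S.l + 1))} (hI : I.Nonempty)
    {x : Fin (S.l + 1) → ℝ} (hxI : ∀ i ∈ I, x i = 0) (hx : ∑ i, x i • S.α i = 0) :
    ∀ i, x i = 0 := by
  obtain ⟨t, ht, ht1⟩ := S.exists_theta_eq_sum
  have hzero : ∀ k, x k.succ - x 0 * t k = 0 := S.coeff_eq_of_sum_eq (y := 0) <| by
    rw [← S.sum_smul_alpha_eq ht, hx]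
    simp
  have hx0 : x 0 = 0 := by
    by_cases h0 : 0 ∈ I
    · exact hxI 0 h0
    obtain ⟨k, hk⟩ := S.exists_succ_mem_of_zero_notMem hI h0
    have := hzero k
    rw [hxI _ hk, zero_sub, neg_eq_zero, mul_eq_zero] at this
    exact this.resolve_right (by have := ht1 k; positivity)
  refine Fin.cases hx0 fun k => ?_
  simpa [hx0] using hzero k

/-- For `k.succ ∈ I` the `α_{k+1}`-coefficient of `γ` is `-z 0 * t k`, and the highest root bounds
it by `t k` in absolute value. -/
theorem coeff_zero_mem_Icc {I : Finset (Fin (S.l + 1))} (hI : I.Nonempty)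
    {γ : Module.Dual ℝ 𝔱} (hγ : γ ∈ S.R) {z : Fin (S.l + 1) → ℤ} (hzI : ∀ i ∈ I, z i = 0)
    (hγz : γ = ∑ i, (z i : ℝ) • S.α i) : -1 ≤ z 0 ∧ z 0 ≤ 1 := by
  by_cases h0 : 0 ∈ I
  · simp [hzI 0 h0]
  obtain ⟨k, hk⟩ := S.exists_succ_mem_of_zero_notMem hI h0
  obtain ⟨t, ht, ht1⟩ := S.exists_theta_eq_sum
  have hy := hγz.trans (S.sum_smul_alpha_eq ht _)
  have hle := S.coeff_le_coeff_theta ht hγ hy k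
  have hge := S.coeff_le_coeff_theta ht (S.neg_mem hγ) (by rw [hy, S.neg_sum_smul_alpha_succ]) k
  have htk : (1 : ℝ) ≤ t k := by exact_mod_cast ht1 k
  rw [show (z k.succ : ℝ) = 0 by exact_mod_cast hzI _ hk] at hle hge
  constructor
  · exact_mod_cast (by nlinarith : (-1 : ℝ) ≤ z 0)
  · exact_mod_cast (by nlinarith : (z 0 : ℝ) ≤ 1)

theorem coeff_nonneg_of_coeff_pos {I : Finset (Fin (S.l + 1))} (hI : I.Nonempty)
    {γ : Module.Dual ℝ 𝔱} (hγ : γ ∈ S.R) {z : Fin (S.l + 1) → ℤ} (hzI : ∀ i ∈ I, z i = 0)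
    (hγz : γ = ∑ i, (z i : ℝ) • S.α i) {i₀ : Fin (S.l + 1)} (hi₀ : 0 < z i₀) :
    ∀ i, 0 ≤ z i := by
  obtain ⟨t, ht, -⟩ := S.exists_theta_eq_sum
  have hy := hγz.trans (S.sum_smul_alpha_eq ht _)
  have hle := S.coeff_le_coeff_theta ht hγ hy
  have hge := S.coeff_le_coeff_theta ht (S.neg_mem hγ) (by rw [hy, S.neg_sum_smul_alpha_succ])
  have hz0 := S.coeff_zero_mem_Icc hI hγ hzI hγz
  obtain h | h | h : z 0 = -1 ∨ z 0 = 0 ∨ z 0 = 1 := by omega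
  · exfalso
    induction i₀ using Fin.cases with
    | zero => omega
    | succ k =>
      have := hle k
      rw [h, Int.cast_neg, Int.cast_one, neg_one_mul, sub_neg_eq_add] at this
      have : (0 : ℝ) < z k.succ := by exact_mod_cast hi₀
      linarith
  · simp only [h, Int.cast_zero, zero_mul, sub_zero] at hy
    rcases S.coeff_nonneg_or_nonpos hγ hy with hpos | hneg
    · exact Fin.cases h.ge fun k => by exact_mod_cast hpos k
    · exfalso
      induction i₀ using Fin.cases with
      | zero => omega
      | succ k =>
        have : (0 : ℝ) < z k.succ := by exact_mod_cast hi₀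
        linarith [hneg k]
  · intro i
    induction i using Fin.cases with
    | zero => omega
    | succ k =>
      have := hge k
      rw [h, Int.cast_one, one_mul] at this
      exact_mod_cast (by linarith : (0 : ℝ) ≤ z k.succ)

theorem sum_ite_smul_alpha (i : Fin (S.l + 1)) (c : ℝ) :
    ∑ j, (if j = i then c else 0) • S.α j = c • S.α i := by
  simp [ite_smul]

theorem mem_posRootsI {I : Finset (Fin (S.l + 1))} {β : Module.Dual ℝ 𝔱} :
    β ∈ S.posRootsI I ↔ β ∈ S.R ∧ ∃ c : Fin (S.l + 1) → ℕ,
      (∀ i ∈ I, c i = 0) ∧ β = ∑ i, (c i : ℝ) • S.α i := by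
  simp [posRootsI, S.finR.mem_toFinset]

theorem alpha_mem_posRootsI {I : Finset (Fin (S.l + 1))} {i : Fin (S.l + 1)} (hi : i ∉ I) :
    S.α i ∈ S.posRootsI I := by
  refine S.mem_posRootsI.mpr ⟨S.α_mem i, fun j => if j = i then 1 else 0,
    fun j hj => if_neg (ne_of_mem_of_not_mem hj hi), ?_⟩
  simp

theorem srefl_apply (i : Fin (S.l + 1)) (β : Module.Dual ℝ 𝔱) :
    S.srefl i β = β - β (S.coroot (S.α i)) • S.α i := by
  simp [srefl, Module.reflection_apply]

theorem exists_coeff_pos_of_ne {β : Module.Dual ℝ 𝔱} (hβ : β ∈ S.R) {b : Fin (S.l + 1) → ℕ}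
    (hb : β = ∑ j, (b j : ℝ) • S.α j) {i : Fin (S.l + 1)} (hne : β ≠ S.α i) :
    ∃ k ≠ i, 0 < b k := by
  by_contra! h
  have hβi : β = (b i : ℝ) • S.α i := by
    rw [hb, ← S.sum_ite_smul_alpha]
    refine Finset.sum_congr rfl fun j _ => ?_
    split_ifs with hj
    · rw [hj]
    · rw [Nat.le_zero.mp (h j hj), Nat.cast_zero]
  rcases S.reduced _ (S.α_mem i) _ (hβi ▸ hβ) with h1 | h1
  · exact hne (by rw [hβi, h1, one_smul])
  · linarith [(b i).cast_nonneg (α := ℝ)]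

/-- `s_{α_i} β` keeps a positive coefficient of `β` at some `α_k`, `k ≠ i`, so by sign coherence it
is again a positive root of `R_I`. -/
theorem srefl_mem_posRootsI_erase {I : Finset (Fin (S.l + 1))} (hI : I.Nonempty)
    {i : Fin (S.l + 1)} (hi : i ∉ I) {β : Module.Dual ℝ 𝔱}
    (hβ : β ∈ (S.posRootsI I).erase (S.α i)) :
    S.srefl i β ∈ (S.posRootsI I).erase (S.α i) := by
  obtain ⟨hne, hβI⟩ := Finset.mem_erase.mp hβ
  obtain ⟨hβR, b, hbI, hb⟩ := S.mem_posRootsI.mp hβI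
  obtain ⟨n, hn⟩ := S.cryst (S.α i) (S.α_mem i) β hβR
  obtain ⟨k, hki, hk⟩ := S.exists_coeff_pos_of_ne hβR hb hne
  have hiI : ∀ j ∈ I, j ≠ i := fun j hj => ne_of_mem_of_not_mem hj hi
  set z : Fin (S.l + 1) → ℤ := fun j => b j - if j = i then n else 0
  have hzI : ∀ j ∈ I, z j = 0 := fun j hj => by simp [z, hbI j hj, hiI j hj]
  have hzk : 0 < z k := by simp [z, hki, hk]
  have hγR : S.srefl i β ∈ S.R := by
    rw [srefl_apply]
    exact S.reflect_mem _ (S.α_mem i) β hβR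
  have hγz : S.srefl i β = ∑ j, (z j : ℝ) • S.α j := by
    rw [srefl_apply, hn, hb, ← S.sum_ite_smul_alpha, ← Finset.sum_sub_distrib]
    refine Finset.sum_congr rfl fun j _ => ?_
    simp only [z]
    split_ifs <;> push_cast <;> module
  have hz := S.coeff_nonneg_of_coeff_pos hI hγR hzI hγz hzk
  refine Finset.mem_erase.mpr ⟨fun heq => ?_, S.mem_posRootsI.mpr
    ⟨hγR, fun j => (z j).toNat, fun j hj => by simp [hzI j hj], ?_⟩⟩
  · have h0 : ∑ j, ((z j : ℝ) - if j = i then 1 else 0) • S.α j = 0 := by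
      calc _ = ∑ j, (z j : ℝ) • S.α j - ∑ j, (if j = i then (1 : ℝ) else 0) • S.α j := by
            rw [← Finset.sum_sub_distrib]
            exact Finset.sum_congr rfl fun j _ => sub_smul (z j : ℝ) _ (S.α j)
        _ = 0 := by rw [← hγz, S.sum_ite_smul_alpha, one_smul, heq, sub_self]
    have := S.eq_zero_of_sum_smul_alpha_eq_zero hI
      (fun j hj => by rw [hzI j hj, if_neg (hiI j hj)]; simp) h0 k
    rw [if_neg hki, sub_zero] at this
    exact hzk.ne' (by exact_mod_cast this)
  · rw [hγz]
    refine Finset.sum_congr rfl fun j _ => ?_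
    congr 1
    exact_mod_cast (Int.toNat_of_nonneg (hz j)).symm

theorem rhoI_apply_coroot_alpha {I : Finset (Fin (S.l + 1))} (hI : I.Nonempty)
    {i : Fin (S.l + 1)} (hi : i ∉ I) : S.rhoI I (S.coroot (S.α i)) = 1 := by
  set c := S.coroot (S.α i)
  set P := (S.posRootsI I).erase (S.α i)
  have hmaps : ∀ β ∈ P, S.srefl i β ∈ P := fun β hβ => S.srefl_mem_posRootsI_erase hI hi hβ
  have hinv : ∀ β, S.srefl i (S.srefl i β) = β := Module.involutive_reflection (S.pairD i)
  have hsymm : ∑ β ∈ P, S.srefl i β c = ∑ β ∈ P, β c :=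
    Finset.sum_nbij' _ _ hmaps hmaps (fun β _ => hinv β) (fun β _ => hinv β) fun _ _ => rfl
  have hneg : ∀ β : Module.Dual ℝ 𝔱, S.srefl i β c = -β c := fun β => by
    rw [srefl_apply, LinearMap.sub_apply, LinearMap.smul_apply, S.pair_self _ (S.α_mem i),
      smul_eq_mul]
    ring
  have hP : ∑ β ∈ P, β c = 0 := by
    simp only [hneg, Finset.sum_neg_distrib] at hsymm
    linarith
  rw [rhoI, LinearMap.smul_apply, LinearMap.sum_apply,
    ← Finset.add_sum_erase _ _ (S.alpha_mem_posRootsI hi), hP, S.pair_self _ (S.α_mem i)]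
  norm_num

theorem posRootsI_singleton_zero : S.posRootsI {0} = S.posRoots := by
  ext β
  rw [S.mem_posRootsI, S.mem_posRoots]
  refine and_congr_right fun _ => ⟨?_, ?_⟩
  · rintro ⟨c, hc0, hc⟩
    refine ⟨fun k => c k.succ, ?_⟩
    rw [hc, Fin.sum_univ_succ, hc0 0 (Finset.mem_singleton_self 0)]
    simp
  · rintro ⟨c, hc⟩
    refine ⟨Fin.cases 0 c, fun j hj => by simp [Finset.mem_singleton.mp hj], ?_⟩
    rw [hc, Fin.sum_univ_succ]
    simp

theorem rho_apply_coroot_alpha_succ (k : Fin S.l) : S.rho (S.coroot (S.α k.succ)) = 1 := by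
  rw [rho, ← posRootsI_singleton_zero, ← rhoI]
  exact S.rhoI_apply_coroot_alpha (Finset.singleton_nonempty 0) (by simp [Fin.succ_ne_zero])

/-- Coroots are determined by their roots, since `s_β` preserves the finite spanning set `R`. -/
theorem apply_coroot_alpha_zero (ν : Module.Dual ℝ 𝔱) :
    ν (S.coroot (S.α 0)) = -ν (S.coroot S.theta) := by
  have h := Module.Dual.eq_of_preReflection_mapsTo S.finR S.spanR (x := S.α 0)
    (f := Module.Dual.eval ℝ _ (S.coroot (S.α 0)))
    (g := Module.Dual.eval ℝ _ (-S.coroot S.theta)) (S.pairD 0)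
    (fun β hβ => by simpa [Module.preReflection_apply] using S.reflect_mem _ (S.α_mem 0) β hβ)
    (by simpa [S.alpha_zero_eq_neg_theta] using S.pair_self _ S.theta_mem)
    (fun β hβ => by
      simpa [Module.preReflection_apply, S.alpha_zero_eq_neg_theta] using
        S.reflect_mem _ S.theta_mem β hβ)
  simpa using LinearMap.congr_fun h ν

theorem rho_apply_coroot_alpha (i : Fin (S.l + 1)) :
    S.rho (S.coroot (S.α i)) = 1 - S.hv * S.kd i := by
  induction i using Fin.cases with
  | zero => simp [kd, S.apply_coroot_alpha_zero, hv]
  | succ k => simp [kd, Fin.succ_ne_zero, S.rho_apply_coroot_alpha_succ]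

theorem hv_smul_nuI (I : Finset (Fin (S.l + 1))) : S.hv • S.nuI I = S.rho - S.rhoI I := by
  rw [nuI, smul_smul, mul_inv_cancel₀ S.hv_pos.ne', one_smul]

theorem nuI_apply_coroot_alpha {I : Finset (Fin (S.l + 1))} (hI : I.Nonempty)
    {i : Fin (S.l + 1)} (hi : i ∉ I) : S.nuI I (S.coroot (S.α i)) = -S.kd i := by
  have h := congrArg (· (S.coroot (S.α i))) (S.hv_smul_nuI I)
  simp only [LinearMap.smul_apply, LinearMap.sub_apply, smul_eq_mul,
    S.rho_apply_coroot_alpha, S.rhoI_apply_coroot_alpha hI hi] at h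
  exact mul_left_cancel₀ S.hv_pos.ne' (by rw [h]; ring)

theorem sigma_apply_smul_nuI {I : Finset (Fin (S.l + 1))} (hI : I.Nonempty)
    {i : Fin (S.l + 1)} (hi : i ∉ I) (m : ℝ) :
    S.sigma m i (m • S.nuI I) = m • S.nuI I :=
  aref_apply_of_apply_eq_neg (by simp [S.nuI_apply_coroot_alpha hI hi])

theorem sigma_apply_eq_srefl {I : Finset (Fin (S.l + 1))} (hI : I.Nonempty)
    {i : Fin (S.l + 1)} (hi : i ∉ I) (m : ℝ) (ν : Module.Dual ℝ 𝔱) :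
    S.sigma m i ν = S.srefl i (ν - m • S.nuI I) + m • S.nuI I :=
  aref_apply_eq_reflection_sub_add (by simp [S.nuI_apply_coroot_alpha hI hi]) ν

theorem map_linearHom_WIA (m : ℝ) (I : Finset (Fin (S.l + 1))) :
    (S.WIA m I).map AffineEquiv.linearHom = S.WbarI I := by
  rw [WIA, MonoidHom.map_closure, WbarI]
  congr 1
  ext e
  constructor
  · rintro ⟨_, ⟨i, hi, rfl⟩, rfl⟩
    exact ⟨i, hi, rfl⟩
  · rintro ⟨i, hi, rfl⟩
    exact ⟨_, ⟨i, hi, rfl⟩, rfl⟩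

/-- The paper's `w̄ •_m ν`. -/
def shiftedAct (I : Finset (Fin (S.l + 1))) (e : Module.Dual ℝ 𝔱 ≃ₗ[ℝ] Module.Dual ℝ 𝔱) (m : ℝ)
    (ν : Module.Dual ℝ 𝔱) : Module.Dual ℝ 𝔱 :=
  e (ν - m • S.nuI I) + m • S.nuI I

theorem shiftedAct_add_rhoI_sub_rhoI (I : Finset (Fin (S.l + 1)))
    (e : Module.Dual ℝ 𝔱 ≃ₗ[ℝ] Module.Dual ℝ 𝔱) (k : ℝ) (μ : Module.Dual ℝ 𝔱) :
    S.shiftedAct I e k (μ + S.rhoI I) - S.rhoI I =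
      S.shiftedAct I e (k + S.hv) (μ + S.rho) - S.rho := by
  have h : μ + S.rho - (k • S.nuI I + (S.rho - S.rhoI I)) = μ + S.rhoI I - k • S.nuI I := by
    abel
  simp only [shiftedAct, add_smul, S.hv_smul_nuI, h]
  abel

end CCQ.RSD

theorem statement7_general {𝔱 : Type} [AddCommGroup 𝔱] [Module ℝ 𝔱]
    (S : RSD 𝔱) (I : Finset (Fin (S.l + 1))) (hI : I.Nonempty) (m : ℤ) :
    (∀ i ∉ I, S.sigma (m : ℝ) i ((m : ℝ) • S.nuI I) = (m : ℝ) • S.nuI I ∧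
      ∀ ν : Module.Dual ℝ 𝔱,
        S.sigma (m : ℝ) i ν = S.srefl i (ν - (m : ℝ) • S.nuI I) + (m : ℝ) • S.nuI I) ∧
    (∀ w ∈ S.WIA (m : ℝ) I, w ((m : ℝ) • S.nuI I) = (m : ℝ) • S.nuI I ∧
      ∀ ν : Module.Dual ℝ 𝔱, w ν = w.linear (ν - (m : ℝ) • S.nuI I) + (m : ℝ) • S.nuI I) ∧
    (∀ w w' : Module.Dual ℝ 𝔱 ≃ᵃ[ℝ] Module.Dual ℝ 𝔱,
      (w * w').linear = w.linear * w'.linear) ∧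
    (∀ w ∈ S.WIA (m : ℝ) I, w.linear ∈ S.WbarI I) ∧
    (∀ w ∈ S.WIA (m : ℝ) I, ∀ w' ∈ S.WIA (m : ℝ) I, w.linear = w'.linear → w = w') ∧
    (∀ e ∈ S.WbarI I, ∃ w ∈ S.WIA (m : ℝ) I, w.linear = e) ∧
    (∀ k : ℕ, ∀ e ∈ S.WbarI I, ∀ μ : Module.Dual ℝ 𝔱,
      (e (μ + S.rhoI I - (k : ℝ) • S.nuI I) + (k : ℝ) • S.nuI I) - S.rhoI I =
        (e (μ + S.rho - ((k : ℝ) + S.hv) • S.nuI I) + ((k : ℝ) + S.hv) • S.nuI I)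
          - S.rho) := by
  have hfix : ∀ w ∈ S.WIA (m : ℝ) I, w ((m : ℝ) • S.nuI I) = (m : ℝ) • S.nuI I :=
    fun w => AffineEquiv.apply_eq_self_of_mem_closure <| by
      rintro _ ⟨i, hi, rfl⟩
      exact S.sigma_apply_smul_nuI hI hi m
  have hmap := S.map_linearHom_WIA m I
  refine ⟨fun i hi => ⟨S.sigma_apply_smul_nuI hI hi m, S.sigma_apply_eq_srefl hI hi m⟩,
    fun w hw => ⟨hfix w hw, AffineEquiv.apply_eq_linear_sub_add (hfix w hw)⟩,
    fun _ _ => rfl, fun w hw => hmap ▸ Subgroup.mem_map_of_mem _ hw,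
    fun w hw w' hw' => AffineEquiv.ext_of_linear_eq_of_apply_eq (hfix w hw) (hfix w' hw'),
    fun e he => Subgroup.mem_map.mp (hmap ▸ he),
    fun k e _ μ => S.shiftedAct_add_rhoI_sub_rhoI I e k μ⟩

/-- (i) for `i ∉ I` the level-`m` affine reflection `σ_i` fixes `m·ν_I` and
equals `ν ↦ s_{α_i}(ν - m·ν_I) + m·ν_I`; consequently every `w ∈ W_I` fixes `m·ν_I`,
acts by `ν ↦ w̄(ν - m·ν_I) + m·ν_I` (`w̄` the linear part), and `w ↦ w̄` is an
isomorphism from `W_I` onto the subgroup `W̄_I ⊆ W` generated by `{s_{α_i} : i ∉ I}`.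
(ii) with `w̄ •_m ν := w̄(ν - m·ν_I) + m·ν_I`, for every `k ≥ 0`, `w̄ ∈ W̄_I`, `μ`:
`w̄ •_k (μ+ρ_I) - ρ_I = w̄ •_{k+h^∨} (μ+ρ) - ρ`. -/
theorem statement7 {𝔱 : Type} [AddCommGroup 𝔱] [Module ℝ 𝔱] [FiniteDimensional ℝ 𝔱]
    (S : RSD 𝔱) (I : Finset (Fin (S.l + 1))) (hI : I.Nonempty) (m : ℤ) (hm : 0 < m) :
    (∀ i ∉ I, S.sigma (m : ℝ) i ((m : ℝ) • S.nuI I) = (m : ℝ) • S.nuI I ∧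
      ∀ ν : Module.Dual ℝ 𝔱,
        S.sigma (m : ℝ) i ν = S.srefl i (ν - (m : ℝ) • S.nuI I) + (m : ℝ) • S.nuI I) ∧
    (∀ w ∈ S.WIA (m : ℝ) I, w ((m : ℝ) • S.nuI I) = (m : ℝ) • S.nuI I ∧
      ∀ ν : Module.Dual ℝ 𝔱, w ν = w.linear (ν - (m : ℝ) • S.nuI I) + (m : ℝ) • S.nuI I) ∧
    (∀ w w' : Module.Dual ℝ 𝔱 ≃ᵃ[ℝ] Module.Dual ℝ 𝔱,
      (w * w').linear = w.linear * w'.linear) ∧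
    (∀ w ∈ S.WIA (m : ℝ) I, w.linear ∈ S.WbarI I) ∧
    (∀ w ∈ S.WIA (m : ℝ) I, ∀ w' ∈ S.WIA (m : ℝ) I, w.linear = w'.linear → w = w') ∧
    (∀ e ∈ S.WbarI I, ∃ w ∈ S.WIA (m : ℝ) I, w.linear = e) ∧
    (∀ k : ℕ, ∀ e ∈ S.WbarI I, ∀ μ : Module.Dual ℝ 𝔱,
      (e (μ + S.rhoI I - (k : ℝ) • S.nuI I) + (k : ℝ) • S.nuI I) - S.rhoI I =
        (e (μ + S.rho - ((k : ℝ) + S.hv) • S.nuI I) + ((k : ℝ) + S.hv) • S.nuI I)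
          - S.rho) :=
  statement7_general S I hI m
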